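/- arXiv:math/9911238 — 5 statements merged into one kernel-verified Lean document; each statement's English description precedes it below -/
import Mathlib

section
/- Let V : ℝ → ℂ satisfy ∫_ℝ |V(x)| e^{γx} dx < ∞ for every γ ∈ ℝ. Then every eigenvalue λ of H = −d²/dx² + V (including real eigenvalues) satisfies |λ| ≤ (9/4) ‖V‖₁², where ‖V‖₁ = ∫_ℝ |V(x)| dx. -/
/-!
Write `lam = k ^ 2` with `0 ≤ k.im` and `g = V f`, so that `f'' + k ^ 2 f = g`. For `c = I k` the
functions `c f - f'` and `c f + f'` solve `w' = -c w - g` and `w' = c w + g`, and they vanish at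
`+∞` and `-∞` respectively, since a function in `L²` with derivative in `L²` tends to `0`. As
`Re (-c) ≥ 0 ≥ Re c`, Duhamel's formula bounds them by `∫ y in Ioi x, ‖g y‖` and
`∫ y in Iic x, ‖g y‖`. Their sum is `2 c f`, so `2 ‖k‖ ‖f x‖ ≤ ∫ ‖g‖ ≤ sup ‖f‖ * ∫ ‖V‖`, and at a
maximum of `‖f‖` this gives `‖lam‖ ≤ (∫ ‖V‖) ^ 2 / 4`.
-/

open MeasureTheory Complex Real Set

/-- `lam` is an eigenvalue of `H = -d²/dx² + V` acting in `L²(ℝ)`: there is a nonzero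
twice continuously differentiable function `f` with `f`, `f′`, `f″` all in `L²`
satisfying `-f″ + V f = lam f` everywhere. -/
def IsEigenvalue1D (V : ℝ → ℂ) (lam : ℂ) : Prop :=
  ∃ f : ℝ → ℂ, f ≠ 0 ∧ ContDiff ℝ 2 f ∧
    MemLp f 2 (volume : Measure ℝ) ∧
    MemLp (deriv f) 2 (volume : Measure ℝ) ∧
    MemLp (deriv (deriv f)) 2 (volume : Measure ℝ) ∧
    ∀ x, -(deriv (deriv f) x) + V x * f x = lam * f x

open Filter Topology

theorem Complex.exists_sq_eq_of_im_nonneg (z : ℂ) : ∃ k : ℂ, k ^ 2 = z ∧ 0 ≤ k.im := by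
  obtain ⟨k, hk⟩ := IsAlgClosed.exists_pow_nat_eq z two_pos
  rcases le_total 0 k.im with h | h
  · exact ⟨k, hk, h⟩
  · exact ⟨-k, by rw [neg_sq, hk], by simpa using h⟩

theorem tendsto_zero_of_memLp_two_of_hasDerivAt {E : Type*} [NormedAddCommGroup E]
    [InnerProductSpace ℝ E] {u u' : ℝ → E}
    (hu : ∀ x, HasDerivAt u (u' x) x) (h : MemLp u 2) (h' : MemLp u' 2) :
    Tendsto u atTop (𝓝 0) ∧ Tendsto u atBot (𝓝 0) := by
  have hderiv : ∀ x, HasDerivAt (‖u ·‖ ^ 2) (2 * inner ℝ (u x) (u' x)) x :=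
    fun x => (hu x).norm_sq
  have hsq : Integrable (‖u ·‖ ^ 2) := h.norm.integrable_sq
  have hsq' : Integrable (fun x => 2 * inner ℝ (u x) (u' x)) := by
    refine (hsq.add h'.norm.integrable_sq).mono' ((h.1.inner h'.1).const_mul 2)
      (ae_of_all _ fun x => ?_)
    have := abs_real_inner_le_norm (u x) (u' x)
    simp only [norm_mul, Real.norm_eq_abs, abs_two, Pi.add_apply]
    nlinarith [sq_nonneg (‖u x‖ - ‖u' x‖)]
  have hnorm : ∀ {l : Filter ℝ}, Tendsto (‖u ·‖ ^ 2) l (𝓝 0) → Tendsto u l (𝓝 0) := by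
    intro l hl
    rw [tendsto_zero_iff_norm_tendsto_zero]
    simpa [Function.comp_def] using (Real.continuous_sqrt.tendsto 0).comp hl
  exact ⟨hnorm (tendsto_zero_of_hasDerivAt_of_integrableOn_Ioi (a := 0) (fun x _ => hderiv x)
      hsq'.integrableOn hsq.integrableOn),
    hnorm (tendsto_zero_of_hasDerivAt_of_integrableOn_Iic (a := 0) (fun x _ => hderiv x)
      hsq'.integrableOn hsq.integrableOn)⟩

theorem exists_forall_norm_le_of_tendsto_zero {E : Type*} [NormedAddCommGroup E] {u : ℝ → E}
    (hu : Continuous u) (hTop : Tendsto u atTop (𝓝 0)) (hBot : Tendsto u atBot (𝓝 0)) :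
    ∃ x₀, ∀ x, ‖u x‖ ≤ ‖u x₀‖ := by
  by_cases h : ∀ x, u x = 0
  · exact ⟨0, fun x => by simp [h]⟩
  push Not at h
  obtain ⟨y, hy⟩ := h
  have hpos : ‖(0 : E)‖ < ‖u y‖ := by simpa using hy
  refine hu.norm.exists_forall_ge' y ?_
  rw [cocompact_eq_atBot_atTop, eventually_sup]
  exact ⟨hBot.norm.eventually_le_const hpos, hTop.norm.eventually_le_const hpos⟩

section Duhamel

variable {a : ℂ} {w g : ℝ → ℂ}

theorem norm_cexp_mul_sub_le_one (ha : 0 ≤ a.re) {x y : ℝ} (h : x ≤ y) :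
    ‖exp (a * (x - y))‖ ≤ 1 := by
  rw [norm_exp, Real.exp_le_one_iff, ← ofReal_sub, re_mul_ofReal]
  exact mul_nonpos_of_nonneg_of_nonpos ha (sub_nonpos.2 h)

theorem eq_integral_Ioi_of_hasDerivAt (ha : 0 ≤ a.re)
    (hw : ∀ y, HasDerivAt w (a * w y - g y) y) (hwlim : Tendsto w atTop (𝓝 0))
    (hg : Integrable g) (x : ℝ) :
    w x = ∫ y in Ioi x, exp (a * (x - y)) * g y := by
  set F : ℝ → ℂ := fun y => exp (a * (x - y)) * w y
  have hF : ∀ y : ℝ, HasDerivAt F (-(exp (a * (x - y)) * g y)) y := by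
    intro y
    have he : HasDerivAt (fun y : ℝ => exp (a * (x - y))) (exp (a * (x - y)) * (a * -1)) y := by
      simpa using ((((hasDerivAt_id (y : ℂ)).const_sub (x : ℂ)).const_mul a).cexp).comp_ofReal
    exact (he.fun_mul (hw y)).congr_deriv (by ring)
  have hFlim : Tendsto F atTop (𝓝 0) := by
    refine squeeze_zero_norm' ?_ (tendsto_norm_zero.comp hwlim)
    filter_upwards [eventually_ge_atTop x] with y hy
    rw [norm_mul]
    exact mul_le_of_le_one_left (norm_nonneg _) (norm_cexp_mul_sub_le_one ha hy)
  have hint : IntegrableOn (fun y : ℝ => -(exp (a * (x - y)) * g y)) (Ioi x) := by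
    refine (hg.integrableOn.bdd_mul (c := 1) (by fun_prop) ?_).neg
    exact (ae_restrict_iff' measurableSet_Ioi).2
      (ae_of_all _ fun y hy => norm_cexp_mul_sub_le_one ha hy.out.le)
  have hFTC := integral_Ioi_of_hasDerivAt_of_tendsto' (fun y _ => hF y) hint hFlim
  rw [integral_neg] at hFTC
  simpa [F] using hFTC.symm

theorem norm_le_integral_Ioi_of_hasDerivAt (ha : 0 ≤ a.re)
    (hw : ∀ y, HasDerivAt w (a * w y - g y) y) (hwlim : Tendsto w atTop (𝓝 0))
    (hg : Integrable g) (x : ℝ) :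
    ‖w x‖ ≤ ∫ y in Ioi x, ‖g y‖ := by
  rw [eq_integral_Ioi_of_hasDerivAt ha hw hwlim hg x]
  refine norm_integral_le_of_norm_le hg.norm.integrableOn
    ((ae_restrict_iff' measurableSet_Ioi).2 (ae_of_all _ fun y hy => ?_))
  rw [norm_mul]
  exact mul_le_of_le_one_left (norm_nonneg _) (norm_cexp_mul_sub_le_one ha hy.out.le)

theorem norm_le_integral_Iic_of_hasDerivAt (ha : a.re ≤ 0)
    (hw : ∀ y, HasDerivAt w (a * w y + g y) y) (hwlim : Tendsto w atBot (𝓝 0))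
    (hg : Integrable g) (x : ℝ) :
    ‖w x‖ ≤ ∫ y in Iic x, ‖g y‖ := by
  have hw_neg : ∀ y : ℝ, HasDerivAt (fun y => w (-y)) (-a * w (-y) - g (-y)) y := fun y =>
    ((hw (-y)).scomp y (hasDerivAt_neg y)).congr_deriv (by simp; ring)
  simpa [integral_comp_neg_Ioi (-x) (‖g ·‖)] using norm_le_integral_Ioi_of_hasDerivAt
    (by simpa using ha) hw_neg (hwlim.comp tendsto_neg_atTop_atBot) hg.comp_neg (-x)

end Duhamel

theorem two_mul_norm_mul_norm_le_integral_of_hasDerivAt {f f' g : ℝ → ℂ} {k : ℂ}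
    (hk : 0 ≤ k.im) (hf : ∀ x, HasDerivAt f (f' x) x)
    (hf' : ∀ x, HasDerivAt f' (g x - k ^ 2 * f x) x) (hg : Integrable g)
    (hf_top : Tendsto f atTop (𝓝 0)) (hf_bot : Tendsto f atBot (𝓝 0))
    (hf'_top : Tendsto f' atTop (𝓝 0)) (hf'_bot : Tendsto f' atBot (𝓝 0)) (x : ℝ) :
    2 * ‖k‖ * ‖f x‖ ≤ ∫ y, ‖g y‖ := by
  set c := I * k
  have hc2 : c ^ 2 = -k ^ 2 := by rw [mul_pow, I_sq]; ring
  have hright := norm_le_integral_Ioi_of_hasDerivAt (a := -c) (w := fun x => c * f x - f' x)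
    (by simpa [c] using hk)
    (fun x => (((hf x).const_mul c).sub (hf' x)).congr_deriv (by linear_combination f x * hc2))
    (by simpa using (hf_top.const_mul c).sub hf'_top) hg x
  have hleft := norm_le_integral_Iic_of_hasDerivAt (a := c) (w := fun x => c * f x + f' x)
    (by simpa [c] using hk)
    (fun x => (((hf x).const_mul c).add (hf' x)).congr_deriv (by linear_combination -f x * hc2))
    (by simpa using (hf_bot.const_mul c).add hf'_bot) hg x
  calc 2 * ‖k‖ * ‖f x‖ = ‖(c * f x - f' x) + (c * f x + f' x)‖ := by
        rw [show (c * f x - f' x) + (c * f x + f' x) = 2 * c * f x by ring]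
        simp [c]
    _ ≤ (∫ y in Ioi x, ‖g y‖) + ∫ y in Iic x, ‖g y‖ :=
        (norm_add_le _ _).trans (add_le_add hright hleft)
    _ = ∫ y, ‖g y‖ := by
        rw [add_comm,
          intervalIntegral.integral_Iic_add_Ioi hg.norm.integrableOn hg.norm.integrableOn]

theorem IsEigenvalue1D.norm_le_sq_integral_div_four {V : ℝ → ℂ} {lam : ℂ}
    (hlam : IsEigenvalue1D V lam) (hV : Integrable (fun x => ‖V x‖)) :
    ‖lam‖ ≤ (∫ x, ‖V x‖) ^ 2 / 4 := by
  obtain ⟨f, hf0, hf2, hf, hf', hf'', heq⟩ := hlam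
  obtain ⟨k, rfl, hk⟩ := Complex.exists_sq_eq_of_im_nonneg lam
  have hdf : ∀ x, HasDerivAt f (deriv f x) x :=
    fun x => ((hf2.differentiable (by norm_num)) x).hasDerivAt
  have hf'2 : ContDiff ℝ 1 (deriv f) := hf2.deriv'
  have hdf' : ∀ x, HasDerivAt (deriv f) (V x * f x - k ^ 2 * f x) x := fun x => by
    rw [show V x * f x - k ^ 2 * f x = deriv (deriv f) x by linear_combination heq x]
    exact ((hf'2.differentiable one_ne_zero) x).hasDerivAt
  obtain ⟨hf_top, hf_bot⟩ := tendsto_zero_of_memLp_two_of_hasDerivAt hdf hf hf'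
  obtain ⟨hf'_top, hf'_bot⟩ := tendsto_zero_of_memLp_two_of_hasDerivAt
    (fun x => ((hf'2.differentiable one_ne_zero) x).hasDerivAt) hf' hf''
  obtain ⟨x₀, hx₀⟩ := exists_forall_norm_le_of_tendsto_zero hf2.continuous hf_top hf_bot
  have hM : 0 < ‖f x₀‖ := by
    obtain ⟨z, hz⟩ := Function.ne_iff.mp hf0
    exact (norm_pos_iff.2 hz).trans_le (hx₀ z)
  have hVf_le : ∀ x, ‖V x * f x‖ ≤ ‖f x₀‖ * ‖V x‖ := fun x => by
    rw [norm_mul, mul_comm]; exact mul_le_mul_of_nonneg_right (hx₀ x) (norm_nonneg _)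
  have hVf_cont : Continuous (fun x => V x * f x) := by
    rw [show (fun x => V x * f x) = fun x => deriv (deriv f) x + k ^ 2 * f x from
      funext fun x => by linear_combination heq x]
    exact (hf'2.continuous_deriv le_rfl).add (continuous_const.mul hf2.continuous)
  have hVf : Integrable (fun x => V x * f x) :=
    (hV.const_mul ‖f x₀‖).mono' hVf_cont.aestronglyMeasurable (ae_of_all _ hVf_le)
  have hx₀_bound := two_mul_norm_mul_norm_le_integral_of_hasDerivAt hk hdf hdf' hVf
    hf_top hf_bot hf'_top hf'_bot x₀
  have hbound : ∫ x, ‖V x * f x‖ ≤ ‖f x₀‖ * ∫ x, ‖V x‖ := by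
    rw [← integral_const_mul]; exact integral_mono hVf.norm (hV.const_mul _) hVf_le
  have hk_le : 2 * ‖k‖ ≤ ∫ x, ‖V x‖ := le_of_mul_le_mul_right (by linarith) hM
  rw [norm_pow]
  nlinarith [norm_nonneg k]

theorem eigenvalue_bound_exponential_decay
    (V : ℝ → ℂ)
    (hV : ∀ γ : ℝ, Integrable (fun x => ‖V x‖ * Real.exp (γ * x)))
    (lam : ℂ) (hlam : IsEigenvalue1D V lam) :
    ‖lam‖ ≤ 9 / 4 * (∫ x, ‖V x‖) ^ 2 := by
  have hsharp := hlam.norm_le_sq_integral_div_four (by simpa using hV 0)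
  nlinarith [sq_nonneg (∫ x, ‖V x‖)]
end

section
/- Let 0 < α ≤ π and let a : [0,α] → ℝ be differentiable with a(θ) = a₁θ + a₂θ² + O(θ³) and a′(θ) = a₁ + 2a₂θ + O(θ²) as θ → 0⁺, where a₂ > 0. Define the parametric envelope curve x(θ) = a(θ) sin(θ) + a′(θ) cos(θ), y(θ) = a(θ) cos(θ) − a′(θ) sin(θ). Then as θ → 0⁺ one has x(θ) − a₁ = 2a₂θ + O(θ²) (so x(θ) − a₁ is small and positive for small θ > 0) and y(θ) = −(x(θ) − a₁)² / (4a₂) + o((x(θ) − a₁)²). -/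
open Real Filter Asymptotics Topology

/-!
Expanding `sin` and `cos` to third order gives `x θ - a₁ = 2 a₂ θ + O(θ²)` and
`y θ = -a₂ θ² + O(θ³)`. Hence `x θ - a₁ ~ 2 a₂ θ`, so `θ² = O((x θ - a₁)²)`, while
`(x θ - a₁)² = 4 a₂² θ² + O(θ³)` makes `y θ + (x θ - a₁)² / (4 a₂) = O(θ³) = o((x θ - a₁)²)`.
-/

lemma isBigO_sin_sub_self_cube (l : Filter ℝ) : (fun θ => sin θ - θ) =O[l] fun θ => θ ^ 3 :=
  IsBigO.of_bound (1 / 6) <| Eventually.of_forall fun θ => by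
    simpa [abs_sub_comm, div_eq_inv_mul, abs_pow] using abs_sub_sin_le θ

lemma isBigO_cos_sub_one_sq (l : Filter ℝ) : (fun θ => cos θ - 1) =O[l] fun θ => θ ^ 2 :=
  IsBigO.of_bound (1 / 2) <| Eventually.of_forall fun θ => by
    have h₁ := one_sub_sq_div_two_le_cos (x := θ)
    have h₂ := cos_le_one θ
    rw [Real.norm_eq_abs, Real.norm_eq_abs, abs_pow, sq_abs, abs_le]
    constructor <;> linarith

lemma isBigO_sin_self (l : Filter ℝ) : (fun θ => sin θ) =O[l] fun θ => θ :=
  IsBigO.of_bound 1 <| Eventually.of_forall fun θ => by simpa using abs_sin_le_abs (x := θ)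

lemma isBigO_cos_one (l : Filter ℝ) : (fun θ => cos θ) =O[l] fun _ => (1 : ℝ) :=
  IsBigO.of_bound 1 <| Eventually.of_forall fun θ => by simpa using abs_cos_le_one θ

section NearZero

variable {l : Filter ℝ}

lemma isBigO_pow_pow_of_le (hl : l ≤ 𝓝 0) {m n : ℕ} (h : n ≤ m) :
    (fun θ : ℝ => θ ^ m) =O[l] fun θ => θ ^ n := by
  rcases h.eq_or_lt with rfl | h
  · exact isBigO_refl _ _
  · exact (isLittleO_pow_pow h).isBigO.mono hl

lemma isBigO_const_add_mul_one (hl : l ≤ 𝓝 0) (c d : ℝ) :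
    (fun θ => c + d * θ) =O[l] fun _ => (1 : ℝ) :=
  ((continuous_const.add (continuous_const.mul continuous_id)).tendsto 0).mono_left hl
    |>.isBigO_one ℝ

lemma isBigO_mul_add_mul_sq (hl : l ≤ 𝓝 0) (c d : ℝ) :
    (fun θ => c * θ + d * θ ^ 2) =O[l] fun θ => θ :=
  ((isBigO_refl (fun θ => θ) l).mul (isBigO_const_add_mul_one hl c d)).congr
    (fun θ => by ring) (fun θ => mul_one θ)

variable {a b : ℝ → ℝ} {a₁ a₂ : ℝ}

lemma envelope_x_sub_isBigO (hl : l ≤ 𝓝 0)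
    (ha : (fun θ => a θ - (a₁ * θ + a₂ * θ ^ 2)) =O[l] fun θ => θ ^ 3)
    (hb : (fun θ => b θ - (a₁ + 2 * a₂ * θ)) =O[l] fun θ => θ ^ 2) :
    (fun θ => a θ * sin θ + b θ * cos θ - a₁ - 2 * a₂ * θ) =O[l] fun θ => θ ^ 2 := by
  have ha_lin : a =O[l] fun θ => θ := by
    simpa using (ha.trans (isBigO_pow_pow_of_le hl (by norm_num : 1 ≤ 3)) |>.congr_right
      (fun θ => pow_one θ)).add (isBigO_mul_add_mul_sq hl a₁ a₂)
  have h₁ : (fun θ => a θ * sin θ) =O[l] fun θ => θ ^ 2 :=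
    (ha_lin.mul (isBigO_sin_self l)).congr_right fun θ => (sq θ).symm
  have h₂ : (fun θ => (b θ - (a₁ + 2 * a₂ * θ)) * cos θ) =O[l] fun θ => θ ^ 2 :=
    (hb.mul (isBigO_cos_one l)).congr_right fun θ => mul_one _
  have h₃ : (fun θ => (a₁ + 2 * a₂ * θ) * (cos θ - 1)) =O[l] fun θ => θ ^ 2 :=
    ((isBigO_const_add_mul_one hl a₁ (2 * a₂)).mul (isBigO_cos_sub_one_sq l)).congr_right
      fun θ => one_mul _
  exact ((h₁.add h₂).add h₃).congr_left fun θ => by ring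

lemma envelope_y_add_isBigO (hl : l ≤ 𝓝 0)
    (ha : (fun θ => a θ - (a₁ * θ + a₂ * θ ^ 2)) =O[l] fun θ => θ ^ 3)
    (hb : (fun θ => b θ - (a₁ + 2 * a₂ * θ)) =O[l] fun θ => θ ^ 2) :
    (fun θ => a θ * cos θ - b θ * sin θ + a₂ * θ ^ 2) =O[l] fun θ => θ ^ 3 := by
  have h₁ : (fun θ => (a θ - (a₁ * θ + a₂ * θ ^ 2)) * cos θ) =O[l] fun θ => θ ^ 3 :=
    (ha.mul (isBigO_cos_one l)).congr_right fun θ => mul_one _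
  have h₂ : (fun θ => (b θ - (a₁ + 2 * a₂ * θ)) * sin θ) =O[l] fun θ => θ ^ 3 :=
    (hb.mul (isBigO_sin_self l)).congr_right fun θ => by ring
  have h₃ : (fun θ => (a₁ * θ + a₂ * θ ^ 2) * (cos θ - 1)) =O[l] fun θ => θ ^ 3 :=
    ((isBigO_mul_add_mul_sq hl a₁ a₂).mul (isBigO_cos_sub_one_sq l)).congr_right
      fun θ => by ring
  have h₄ : (fun θ => (a₁ + 2 * a₂ * θ) * (sin θ - θ)) =O[l] fun θ => θ ^ 3 :=
    ((isBigO_const_add_mul_one hl a₁ (2 * a₂)).mul (isBigO_sin_sub_self_cube l)).congr_right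
      fun θ => one_mul _
  exact (((h₁.sub h₂).add h₃).sub h₄).congr_left fun θ => by ring

variable {u v : ℝ → ℝ} {c : ℝ}

lemma isEquivalent_const_mul_of_isBigO_sub (hl : l ≤ 𝓝 0) (hc : c ≠ 0)
    (hu : (fun θ => u θ - c * θ) =O[l] fun θ => θ ^ 2) : u ~[l] fun θ => c * θ :=
  (hu.trans_isLittleO ((isLittleO_pow_id one_lt_two).mono hl)).trans_isBigO
    (isBigO_self_const_mul hc _ l)

lemma sq_sub_const_mul_sq_isBigO_cube (hl : l ≤ 𝓝 0) (hc : c ≠ 0)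
    (hu : (fun θ => u θ - c * θ) =O[l] fun θ => θ ^ 2) :
    (fun θ => u θ ^ 2 - c ^ 2 * θ ^ 2) =O[l] fun θ => θ ^ 3 := by
  have hu_lin : (fun θ => u θ + c * θ) =O[l] fun θ => θ :=
    ((isEquivalent_const_mul_of_isBigO_sub hl hc hu).isBigO.trans
      (isBigO_const_mul_self c _ l)).add (isBigO_const_mul_self c _ l)
  exact (hu.mul hu_lin).congr (fun θ => by ring) (fun θ => by ring)

lemma add_sq_div_isLittleO_sq (hl : l ≤ 𝓝 0) (hc : c ≠ 0)
    (hu : (fun θ => u θ - 2 * c * θ) =O[l] fun θ => θ ^ 2)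
    (hv : (fun θ => v θ + c * θ ^ 2) =O[l] fun θ => θ ^ 3) :
    (fun θ => v θ + u θ ^ 2 / (4 * c)) =o[l] fun θ => u θ ^ 2 := by
  have h2c : 2 * c ≠ 0 := mul_ne_zero two_ne_zero hc
  have h_cube : (fun θ => v θ + u θ ^ 2 / (4 * c)) =O[l] fun θ => θ ^ 3 :=
    (hv.add ((sq_sub_const_mul_sq_isBigO_cube hl h2c hu).const_mul_left (4 * c)⁻¹)).congr_left
      fun θ => by field_simp; ring
  have h_sq : (fun θ => θ ^ 2) =O[l] fun θ => u θ ^ 2 :=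
    (isBigO_self_const_mul (pow_ne_zero 2 h2c) _ l).trans
      (((isEquivalent_const_mul_of_isBigO_sub hl h2c hu).pow 2).isBigO_symm.congr_left
        fun θ => by simp only [Pi.pow_apply]; ring)
  exact (h_cube.trans_isLittleO ((isLittleO_pow_pow (by norm_num : 2 < 3)).mono hl)).trans_isBigO
    h_sq

end NearZero

theorem envelope_asymptotics_general
    (a₁ a₂ : ℝ) (ha₂ : 0 < a₂)
    (a : ℝ → ℝ)
    (ha : (fun θ => a θ - (a₁ * θ + a₂ * θ ^ 2)) =O[nhdsWithin 0 (Set.Ioi 0)]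
      fun θ => θ ^ 3)
    (ha' : (fun θ => deriv a θ - (a₁ + 2 * a₂ * θ)) =O[nhdsWithin 0 (Set.Ioi 0)]
      fun θ => θ ^ 2)
    (x y : ℝ → ℝ)
    (hx : ∀ θ, x θ = a θ * Real.sin θ + deriv a θ * Real.cos θ)
    (hy : ∀ θ, y θ = a θ * Real.cos θ - deriv a θ * Real.sin θ) :
    ((fun θ => x θ - a₁ - 2 * a₂ * θ) =O[nhdsWithin 0 (Set.Ioi 0)] fun θ => θ ^ 2) ∧
    (∀ᶠ θ in nhdsWithin 0 (Set.Ioi 0), 0 < x θ - a₁) ∧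
    ((fun θ => y θ + (x θ - a₁) ^ 2 / (4 * a₂)) =o[nhdsWithin 0 (Set.Ioi 0)]
      fun θ => (x θ - a₁) ^ 2) := by
  have hl : 𝓝[>] (0 : ℝ) ≤ 𝓝 0 := nhdsWithin_le_nhds
  have hx_sub : (fun θ => x θ - a₁ - 2 * a₂ * θ) =O[𝓝[>] 0] fun θ => θ ^ 2 := by
    simpa only [hx] using envelope_x_sub_isBigO hl ha ha'
  have hy_add : (fun θ => y θ + a₂ * θ ^ 2) =O[𝓝[>] 0] fun θ => θ ^ 3 := by
    simpa only [hy] using envelope_y_add_isBigO hl ha ha'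
  have hx_equiv : (fun θ => x θ - a₁) ~[𝓝[>] 0] fun θ => 2 * a₂ * θ :=
    isEquivalent_const_mul_of_isBigO_sub hl (by positivity) hx_sub
  refine ⟨hx_sub, hx_equiv.eventually_pos ?_, add_sq_div_isLittleO_sq hl ha₂.ne' hx_sub hy_add⟩
  filter_upwards [self_mem_nhdsWithin] with θ hθ
  exact mul_pos (by positivity) hθ

theorem envelope_asymptotics
    (α a₁ a₂ : ℝ) (hα₀ : 0 < α) (hα₁ : α ≤ π) (ha₂ : 0 < a₂)
    (a : ℝ → ℝ)
    (hdiff : ∀ θ ∈ Set.Icc (0 : ℝ) α, DifferentiableAt ℝ a θ)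
    (ha : (fun θ => a θ - (a₁ * θ + a₂ * θ ^ 2)) =O[nhdsWithin 0 (Set.Ioi 0)]
      fun θ => θ ^ 3)
    (ha' : (fun θ => deriv a θ - (a₁ + 2 * a₂ * θ)) =O[nhdsWithin 0 (Set.Ioi 0)]
      fun θ => θ ^ 2)
    (x y : ℝ → ℝ)
    (hx : ∀ θ, x θ = a θ * Real.sin θ + deriv a θ * Real.cos θ)
    (hy : ∀ θ, y θ = a θ * Real.cos θ - deriv a θ * Real.sin θ) :
    ((fun θ => x θ - a₁ - 2 * a₂ * θ) =O[nhdsWithin 0 (Set.Ioi 0)] fun θ => θ ^ 2) ∧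
    (∀ᶠ θ in nhdsWithin 0 (Set.Ioi 0), 0 < x θ - a₁) ∧
    ((fun θ => y θ + (x θ - a₁) ^ 2 / (4 * a₂)) =o[nhdsWithin 0 (Set.Ioi 0)]
      fun θ => (x θ - a₁) ^ 2) :=
  envelope_asymptotics_general a₁ a₂ ha₂ a ha ha' x y hx hy
end

section
/- Let V ∈ L¹(ℝ) ∩ L²(ℝ) be complex-valued, let z ∈ ℂ with Re(z) > 0, and suppose g ∈ L²(ℝ), g ≠ 0, satisfies g(x) = −∫_ℝ |V(x)|^{1/2} · (e^{−z|x−y|}/(2z)) · sgn(V(y)) |V(y)|^{1/2} g(y) dy for almost every x ∈ ℝ, where sgn(V(y)) = V(y)/|V(y)| if V(y) ≠ 0 and sgn(V(y)) = 0 otherwise. Then |z| ≤ ‖V‖₁ / 2, where ‖V‖₁ = ∫_ℝ |V(x)| dx. -/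
open MeasureTheory Complex Real Set

/-- The phase (complex sign) of `w`: `w/|w|` if `w ≠ 0`, and `0` otherwise. -/
noncomputable def csgn (w : ℂ) : ℂ := if w = 0 then 0 else w / (‖w‖ : ℂ)

/-!
Put `w = |V|^{1/2}`. Since `|e^{-z|x-y|}/(2z)| ≤ 1/(2|z|)` for `Re z > 0` and `|sgn V| ≤ 1`, the
eigenvalue equation gives `|g(x)| ≤ w(x) C / (2|z|)` with `C = ∫ w |g|`, and `C > 0` because
`g ≠ 0`. Multiplying by `w` and integrating yields `C ≤ C ‖V‖₁ / (2|z|)`.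
-/

lemma norm_csgn_le (w : ℂ) : ‖csgn w‖ ≤ 1 := by
  unfold csgn
  split_ifs with hw
  · simp
  · rw [norm_div, Complex.norm_real, norm_norm, div_self (norm_ne_zero_iff.mpr hw)]

lemma norm_cexp_neg_mul_div_two_mul_le {z : ℂ} (hz : 0 ≤ z.re) {t : ℝ} (ht : 0 ≤ t) :
    ‖cexp (-z * t) / (2 * z)‖ ≤ (2 * ‖z‖)⁻¹ := by
  have hre : (-z * t).re = -(z.re * t) := by simp
  rw [norm_div, norm_mul, Complex.norm_two, Complex.norm_exp, hre, div_eq_mul_inv]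
  exact mul_le_of_le_one_left (by positivity) (Real.exp_le_one_iff.2 (by nlinarith))

lemma memLp_two_sqrt_norm {α E : Type*} [MeasurableSpace α] {μ : Measure α}
    [NormedAddCommGroup E] {f : α → E} (hf : Integrable f μ) :
    MemLp (fun x => √‖f x‖) 2 μ := by
  have hm : AEStronglyMeasurable (fun x => √‖f x‖) μ :=
    (Real.continuous_sqrt.comp continuous_norm).comp_aestronglyMeasurable hf.1
  rw [memLp_two_iff_integrable_sq hm]
  simpa only [Real.sq_sqrt (norm_nonneg _)] using hf.norm

lemma norm_le_mul_integral_of_eq_neg_integral {V g : ℝ → ℂ} {z : ℂ} (hz : 0 ≤ z.re)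
    (hVg : Integrable fun y => √‖V y‖ * ‖g y‖) {x : ℝ}
    (hx : g x = -∫ y, (√‖V x‖ : ℂ) * (cexp (-z * |x - y|) / (2 * z)) *
        csgn (V y) * (√‖V y‖ : ℂ) * g y) :
    ‖g x‖ ≤ (2 * ‖z‖)⁻¹ * √‖V x‖ * ∫ y, √‖V y‖ * ‖g y‖ := by
  rw [hx, norm_neg, ← integral_const_mul]
  refine (norm_integral_le_integral_norm _).trans <|
    integral_mono_of_nonneg (ae_of_all _ fun _ => norm_nonneg _) (hVg.const_mul _)
      (ae_of_all _ fun y => ?_)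
  simp only [norm_mul, Complex.norm_real, Real.norm_of_nonneg (Real.sqrt_nonneg _)]
  have hG := norm_cexp_neg_mul_div_two_mul_le hz (abs_nonneg (x - y))
  have hS := norm_csgn_le (V y)
  calc _ ≤ √‖V x‖ * (2 * ‖z‖)⁻¹ * 1 * √‖V y‖ * ‖g y‖ := by gcongr
    _ = _ := by ring

lemma one_le_mul_integral_sq_of_norm_le {α E : Type*} [MeasurableSpace α] {μ : Measure α}
    [NormedAddCommGroup E] {w : α → ℝ} {g : α → E} {K : ℝ} (hw : 0 ≤ w)
    (hw2 : Integrable (fun x => w x ^ 2) μ) (hg0 : ¬g =ᵐ[μ] 0)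
    (hbound : ∀ᵐ x ∂μ, ‖g x‖ ≤ K * w x * ∫ y, w y * ‖g y‖ ∂μ) :
    1 ≤ K * ∫ x, w x ^ 2 ∂μ := by
  set C := ∫ y, w y * ‖g y‖ ∂μ
  have hC : 0 < C := by
    have hC_nonneg : 0 ≤ C := integral_nonneg fun y => mul_nonneg (hw y) (norm_nonneg _)
    refine hC_nonneg.lt_of_ne fun hC_zero => hg0 ?_
    filter_upwards [hbound] with x hx
    rwa [← hC_zero, mul_zero, norm_le_zero_iff] at hx
  have hCle : C ≤ C * (K * ∫ x, w x ^ 2 ∂μ) := by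
    calc C ≤ ∫ x, C * K * w x ^ 2 ∂μ :=
          integral_mono_of_nonneg (ae_of_all _ fun y => mul_nonneg (hw y) (norm_nonneg _))
            (hw2.const_mul _) (hbound.mono fun x hx =>
              (mul_le_mul_of_nonneg_left hx (hw x)).trans_eq (by ring))
      _ = C * (K * ∫ x, w x ^ 2 ∂μ) := by rw [integral_const_mul]; ring
  exact le_of_mul_le_mul_left (by simpa using hCle) hC

theorem birman_schwinger_bound_general
    (V : ℝ → ℂ) (hV1 : Integrable V)
    (z : ℂ) (hz : 0 < z.re)
    (g : ℝ → ℂ) (hgL2 : MemLp g 2 (volume : Measure ℝ)) (hg0 : ¬(g =ᵐ[volume] 0))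
    (heq : ∀ᵐ x ∂(volume : Measure ℝ), g x =
      -∫ y, (Real.sqrt ‖V x‖ : ℂ) *
        (Complex.exp (-z * |x - y|) / (2 * z)) *
        csgn (V y) * (Real.sqrt ‖V y‖ : ℂ) * g y) :
    ‖z‖ ≤ (∫ x, ‖V x‖) / 2 := by
  have hz0 : 0 < ‖z‖ := norm_pos_iff.2 fun h => by simp [h] at hz
  have hW := memLp_two_sqrt_norm hV1
  have hWg : Integrable fun y => √‖V y‖ * ‖g y‖ := hW.integrable_mul hgL2.norm
  have key := one_le_mul_integral_sq_of_norm_le (fun x => Real.sqrt_nonneg _) hW.integrable_sq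
    hg0 (heq.mono fun x hx => norm_le_mul_integral_of_eq_neg_integral hz.le hWg hx)
  simp only [Real.sq_sqrt (norm_nonneg _)] at key
  rw [inv_mul_eq_div, one_le_div (by positivity)] at key
  linarith

theorem birman_schwinger_bound
    (V : ℝ → ℂ) (hV1 : Integrable V) (hV2 : MemLp V 2 (volume : Measure ℝ))
    (z : ℂ) (hz : 0 < z.re)
    (g : ℝ → ℂ) (hgL2 : MemLp g 2 (volume : Measure ℝ)) (hg0 : ¬(g =ᵐ[volume] 0))
    (heq : ∀ᵐ x ∂(volume : Measure ℝ), g x =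
      -∫ y, (Real.sqrt ‖V x‖ : ℂ) *
        (Complex.exp (-z * |x - y|) / (2 * z)) *
        csgn (V y) * (Real.sqrt ‖V y‖ : ℂ) * g y) :
    ‖z‖ ≤ (∫ x, ‖V x‖) / 2 :=
  birman_schwinger_bound_general V hV1 z hz g hgL2 hg0 heq
end

section
/- Let V ∈ L¹(ℝ) be complex-valued, and let z ∈ ℂ with Re(z) ≥ 0 and |z| > (3/2) ‖V‖₁, where ‖V‖₁ = ∫_ℝ |V(x)| dx. Suppose f̃ : ℝ → ℂ is a bounded continuous function satisfying f̃(x) = 1 + (1/(2z)) ∫_{−∞}^{x} (1 − e^{−2z(x−t)}) V(t) f̃(t) dt for all x ∈ ℝ, and define φ(z) = 2z + ∫_ℝ V(t) f̃(t) dt. Then φ(z) ≠ 0. -/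
/-!
Let `S = sup |f̃|`. Since `Re z ≥ 0`, the kernel satisfies `|1 - e^{-2z(x-t)}| ≤ 2` for `t ≤ x`, so the
integral equation gives `|f̃(x)| ≤ 1 + S ‖V‖₁ / |z|`; taking the supremum, `S (|z| - ‖V‖₁) ≤ |z|`.
If `φ(z) = 0`, then `2|z| = |∫ V f̃| ≤ S ‖V‖₁`. Together these force `2 (|z| - ‖V‖₁) ≤ ‖V‖₁`,
that is `|z| ≤ (3/2) ‖V‖₁`.
-/

open MeasureTheory Complex Real Set

section

variable {α E G : Type*} [MeasurableSpace α] {μ : Measure α}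
  [NormedAddCommGroup E] [NormedSpace ℝ E] [NormedAddCommGroup G]

theorem norm_setIntegral_le_mul_integral_norm {F : α → E} {V : α → G} {s : Set α} {C : ℝ}
    (hs : MeasurableSet s) (hV : Integrable V μ) (hC : 0 ≤ C)
    (hF : ∀ t ∈ s, ‖F t‖ ≤ C * ‖V t‖) :
    ‖∫ t in s, F t ∂μ‖ ≤ C * ∫ t, ‖V t‖ ∂μ :=
  calc ‖∫ t in s, F t ∂μ‖ ≤ ∫ t in s, C * ‖V t‖ ∂μ :=
        norm_integral_le_of_norm_le (hV.norm.const_mul C).restrict (ae_restrict_of_forall_mem hs hF)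
    _ ≤ ∫ t, C * ‖V t‖ ∂μ :=
        setIntegral_le_integral (hV.norm.const_mul C) (.of_forall fun t => by positivity)
    _ = C * ∫ t, ‖V t‖ ∂μ := integral_const_mul C _

end

theorem Complex.norm_one_sub_exp_le_two {w : ℂ} (hw : w.re ≤ 0) : ‖1 - exp w‖ ≤ 2 :=
  calc ‖1 - exp w‖ ≤ ‖(1 : ℂ)‖ + ‖exp w‖ := norm_sub_le _ _
    _ ≤ 1 + 1 := by
      rw [norm_one, norm_exp]
      gcongr
      exact Real.exp_le_one_iff.mpr hw
    _ = 2 := one_add_one_eq_two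

section

variable {V f : ℝ → ℂ} {z : ℂ} {S : ℝ}

theorem norm_le_one_add_of_volterra_eq (hV : Integrable V) (hz : 0 ≤ z.re)
    (hS : ∀ x, ‖f x‖ ≤ S)
    (heq : ∀ x : ℝ, f x = 1 + (1 / (2 * z)) *
      ∫ t in Set.Iic x, (1 - Complex.exp (-2 * z * (x - t))) * V t * f t) (x : ℝ) :
    ‖f x‖ ≤ 1 + S * (∫ t, ‖V t‖) / ‖z‖ := by
  have hkernel : ∀ t ∈ Iic x,
      ‖(1 - Complex.exp (-2 * z * (x - t))) * V t * f t‖ ≤ 2 * S * ‖V t‖ := by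
    intro t (ht : t ≤ x)
    have hre : (-2 * z * (x - t)).re ≤ 0 := by
      rw [← ofReal_sub]
      simp only [mul_re, ofReal_re, ofReal_im, neg_re, neg_im, re_ofNat, im_ofNat]
      nlinarith [sub_nonneg.mpr ht]
    rw [norm_mul, norm_mul]
    calc _ ≤ 2 * ‖V t‖ * S := by
          gcongr
          · exact norm_one_sub_exp_le_two hre
          · exact hS t
      _ = 2 * S * ‖V t‖ := by ring
  have hS0 : 0 ≤ S := (norm_nonneg _).trans (hS 0)
  have hintegral :=
    norm_setIntegral_le_mul_integral_norm measurableSet_Iic hV (by positivity) hkernel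
  calc ‖f x‖ ≤ ‖(1 : ℂ)‖ + ‖1 / (2 * z)‖ *
        ‖∫ t in Iic x, (1 - Complex.exp (-2 * z * (x - t))) * V t * f t‖ := by
        rw [heq x, ← norm_mul]
        exact norm_add_le _ _
    _ ≤ 1 + 1 / (2 * ‖z‖) * (2 * S * ∫ t, ‖V t‖) := by
        rw [norm_one, norm_div, norm_one, norm_mul, RCLike.norm_ofNat]
        gcongr
    _ = 1 + S * (∫ t, ‖V t‖) / ‖z‖ := by ring

end

theorem phi_nonvanishing_for_large_z_general
    (V : ℝ → ℂ) (hV1 : Integrable V)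
    (z : ℂ) (hzre : 0 ≤ z.re)
    (hz : (3 / 2) * (∫ x, ‖V x‖) < ‖z‖)
    (ftil : ℝ → ℂ)
    (hbdd : ∃ M : ℝ, ∀ x, ‖ftil x‖ ≤ M)
    (heq : ∀ x : ℝ, ftil x = 1 + (1 / (2 * z)) *
      ∫ t in Set.Iic x, (1 - Complex.exp (-2 * z * (x - t))) * V t * ftil t)
    (φ : ℂ) (hφ : φ = 2 * z + ∫ t, V t * ftil t) :
    φ ≠ 0 := by
  set I := ∫ x, ‖V x‖
  have hI : 0 ≤ I := integral_nonneg fun _ => norm_nonneg _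
  have hz0 : 0 < ‖z‖ := lt_of_le_of_lt (by positivity) hz
  obtain ⟨M, hM⟩ := hbdd
  set S := ⨆ x, ‖ftil x‖
  have hS : ∀ x, ‖ftil x‖ ≤ S := le_ciSup ⟨M, forall_mem_range.mpr hM⟩
  have hS0 : 0 ≤ S := (norm_nonneg _).trans (hS 0)
  have hS_self : S * ‖z‖ ≤ ‖z‖ + S * I :=
    calc S * ‖z‖ ≤ (1 + S * I / ‖z‖) * ‖z‖ := by
          gcongr
          exact ciSup_le (norm_le_one_add_of_volterra_eq hV1 hzre hS heq)
      _ = ‖z‖ + S * I := by field_simp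
  intro hφ0
  have h2z_eq : 2 * z = -∫ t, V t * ftil t := eq_neg_of_add_eq_zero_left (hφ0 ▸ hφ).symm
  have h2z : 2 * ‖z‖ ≤ S * I :=
    calc 2 * ‖z‖ = ‖∫ t in univ, V t * ftil t‖ := by
          rw [setIntegral_univ, ← norm_neg (∫ t, _), ← h2z_eq, norm_mul, RCLike.norm_ofNat]
      _ ≤ S * I := norm_setIntegral_le_mul_integral_norm MeasurableSet.univ hV1 hS0
          fun t _ => by rw [norm_mul, mul_comm]; gcongr; exact hS t
  nlinarith [mul_le_mul_of_nonneg_right h2z (by linarith : 0 ≤ ‖z‖ - I)]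

theorem phi_nonvanishing_for_large_z
    (V : ℝ → ℂ) (hV1 : Integrable V)
    (z : ℂ) (hzre : 0 ≤ z.re)
    (hz : (3 / 2) * (∫ x, ‖V x‖) < ‖z‖)
    (ftil : ℝ → ℂ) (hcont : Continuous ftil)
    (hbdd : ∃ M : ℝ, ∀ x, ‖ftil x‖ ≤ M)
    (heq : ∀ x : ℝ, ftil x = 1 + (1 / (2 * z)) *
      ∫ t in Set.Iic x, (1 - Complex.exp (-2 * z * (x - t))) * V t * ftil t)
    (φ : ℂ) (hφ : φ = 2 * z + ∫ t, V t * ftil t) :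
    φ ≠ 0 :=
  phi_nonvanishing_for_large_z_general V hV1 z hzre hz ftil hbdd heq φ hφ
end

section
/- Fix an integer N ≥ 1 and 0 < α ≤ π, and let S = { z ∈ ℂ : z ≠ 0, 0 ≤ 2 arg(z) ≤ α }. Let u : S × ℝ^N → ℂ be bounded, such that for each x ∈ ℝ^N the map z ↦ u(z,x) is continuous on S and analytic in the interior of S, and such that u(rz, x) = u(z, rx) for all r > 0, z ∈ S, x ∈ ℝ^N. Define c(θ) := sup_{x∈ℝ^N} |u(e^{iθ/2}, x)| for θ ∈ [0,α], and assume c(θ) > 0 for all θ. Then θ ↦ log c(θ) is a convex function on [0,α]. -/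
/-!
The map `w ↦ exp (I * w / 2)` sends the vertical strip `0 ≤ re w ≤ α` onto the sector, the line
`re w = θ` onto the ray of angle `θ / 2`. By the scaling relation, the supremum of `‖u (·, x)‖`
over `x` is the same at every point of that ray, namely `c θ`. Hence for `θ₀ < θ₁`, the Hadamard
three lines theorem applied to `w ↦ u (exp (I * w / 2), x)` on the strip `θ₀ ≤ re w ≤ θ₁` gives
`c (a θ₀ + b θ₁) ≤ c θ₀ ^ a * c θ₁ ^ b`, which is the convexity of `log c`.
-/

open Complex Real Set

def sector (α : ℝ) : Set ℂ := {z : ℂ | z ≠ 0 ∧ 0 ≤ 2 * z.arg ∧ 2 * z.arg ≤ α}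

theorem convexOn_log_of_le_rpow_mul_rpow {s : Set ℝ} {c : ℝ → ℝ} (hs : Convex ℝ s)
    (hc : ∀ x ∈ s, 0 < c x)
    (h : ∀ x ∈ s, ∀ y ∈ s, x < y → ∀ a b : ℝ, 0 < a → 0 < b → a + b = 1 →
      c (a * x + b * y) ≤ c x ^ a * c y ^ b) :
    ConvexOn ℝ s fun x => Real.log (c x) :=
  LinearOrder.convexOn_of_lt hs fun x hx y hy hxy a b ha hb hab => by
    have hcx := hc x hx
    have hcy := hc y hy
    calc Real.log (c (a * x + b * y))
        ≤ Real.log (c x ^ a * c y ^ b) :=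
          Real.log_le_log (hc _ (hs hx hy ha.le hb.le hab)) (h x hx y hy hxy a b ha hb hab)
      _ = a * Real.log (c x) + b * Real.log (c y) := by
          rw [Real.log_mul (rpow_pos_of_pos hcx a).ne' (rpow_pos_of_pos hcy b).ne',
            Real.log_rpow hcx, Real.log_rpow hcy]

theorem exp_I_mul_div_two_eq (w : ℂ) :
    exp (I * w / 2) = (Real.exp (-w.im / 2) : ℂ) * exp (I * w.re / 2) := by
  rw [ofReal_exp, ← Complex.exp_add]
  congr 1
  conv_lhs => rw [← re_add_im w]
  push_cast
  ring_nf
  rw [I_sq]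
  ring

theorem arg_exp_I_mul_div_two {w : ℂ} (hw : w.re ∈ Ioc (-(2 * π)) (2 * π)) :
    (exp (I * w / 2)).arg = w.re / 2 := by
  have him : (I * w / 2).im = w.re / 2 := by simp
  rw [arg_exp, him, toIocMod_eq_self]
  constructor <;> linarith [hw.1, hw.2]

theorem exp_I_mul_div_two_mem_sector {α : ℝ} (hα : α ≤ 2 * π) {w : ℂ} (hw : w.re ∈ Icc 0 α) :
    exp (I * w / 2) ∈ sector α := by
  have harg := arg_exp_I_mul_div_two (w := w) ⟨by linarith [hw.1, pi_pos], hw.2.trans hα⟩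
  refine ⟨Complex.exp_ne_zero _, ?_, ?_⟩ <;> rw [harg] <;> linarith [hw.1, hw.2]

theorem isOpenMap_exp_I_mul_div_two : IsOpenMap fun w : ℂ => exp (I * w / 2) := by
  refine isOpenMap_of_hasStrictDerivAt (f' := fun w => exp (I * w / 2) * (I / 2)) (fun w => ?_)
    fun w => mul_ne_zero (Complex.exp_ne_zero _) (by simp)
  have h := ((hasStrictDerivAt_id w).const_mul I).div_const 2
  simpa using h.cexp

theorem exp_I_mul_div_two_mem_interior_sector {α : ℝ} (hα : α ≤ 2 * π) {w : ℂ}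
    (hw : w.re ∈ Ioo 0 α) : exp (I * w / 2) ∈ interior (sector α) := by
  have himage : (fun v : ℂ => exp (I * v / 2)) '' (re ⁻¹' Ioo 0 α) ⊆ sector α :=
    image_subset_iff.2 fun _ hv => exp_I_mul_div_two_mem_sector hα (Ioo_subset_Icc_self hv)
  exact interior_maximal himage (isOpenMap_exp_I_mul_div_two _ (isOpen_Ioo.preimage continuous_re))
    (mem_image_of_mem _ hw)

open HadamardThreeLines in
theorem norm_le_rpow_mul_rpow_of_sector {F : Type*} [NormedAddCommGroup F] [NormedSpace ℂ F]
    {α : ℝ} (hα : α ≤ 2 * π) {f : ℂ → F} (hf_cont : ContinuousOn f (sector α))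
    (hf_an : DifferentiableOn ℂ f (interior (sector α))) {M : ℝ}
    (hf_bdd : ∀ z ∈ sector α, ‖f z‖ ≤ M) {θ₀ θ₁ : ℝ} (hθ₀ : 0 ≤ θ₀) (hlt : θ₀ < θ₁)
    (hθ₁ : θ₁ ≤ α) {B₀ B₁ : ℝ} (hB₀ : ∀ r : ℝ, 0 < r → ‖f (r * exp (I * θ₀ / 2))‖ ≤ B₀)
    (hB₁ : ∀ r : ℝ, 0 < r → ‖f (r * exp (I * θ₁ / 2))‖ ≤ B₁) {a b : ℝ} (ha : 0 ≤ a)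
    (hb : 0 ≤ b) (hab : a + b = 1) :
    ‖f (exp (I * ↑(a * θ₀ + b * θ₁) / 2))‖ ≤ B₀ ^ a * B₁ ^ b := by
  set g : ℂ → ℂ := fun w => exp (I * w / 2)
  have hg : Differentiable ℂ g := by fun_prop
  have hg_closed : MapsTo g (verticalClosedStrip θ₀ θ₁) (sector α) := fun w hw =>
    exp_I_mul_div_two_mem_sector hα ⟨hθ₀.trans hw.1, hw.2.trans hθ₁⟩
  have hg_open : MapsTo g (verticalStrip θ₀ θ₁) (interior (sector α)) := fun w hw =>
    exp_I_mul_div_two_mem_interior_sector hα ⟨hθ₀.trans_lt hw.1, hw.2.trans_le hθ₁⟩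
  have hd : DiffContOnCl ℂ (f ∘ g) (verticalStrip θ₀ θ₁) := by
    refine ⟨hf_an.comp hg.differentiableOn hg_open, ?_⟩
    rw [verticalStrip, closure_preimage_re, closure_Ioo hlt.ne]
    exact hf_cont.comp hg.continuous.continuousOn hg_closed
  have hB : BddAbove ((norm ∘ f ∘ g) '' verticalClosedStrip θ₀ θ₁) := by
    refine ⟨M, ?_⟩
    rintro _ ⟨w, hw, rfl⟩
    exact hf_bdd _ (hg_closed hw)
  have hline : ∀ θ B : ℝ, (∀ r : ℝ, 0 < r → ‖f (r * exp (I * θ / 2))‖ ≤ B) →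
      ∀ w ∈ re ⁻¹' {θ}, ‖(f ∘ g) w‖ ≤ B := by
    rintro θ B hθ w (rfl : w.re = θ)
    show ‖f (exp (I * w / 2))‖ ≤ B
    rw [exp_I_mul_div_two_eq]
    exact hθ _ (Real.exp_pos _)
  have hmid : ((a * θ₀ + b * θ₁ : ℝ) : ℂ) ∈ verticalClosedStrip θ₀ θ₁ := by
    rw [verticalClosedStrip, mem_preimage, ofReal_re, eq_sub_of_add_eq hab]
    constructor <;> nlinarith
  have hexp : (((a * θ₀ + b * θ₁ : ℝ) : ℂ).re - θ₀) / (θ₁ - θ₀) = b := by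
    rw [ofReal_re, eq_sub_of_add_eq hab]
    field_simp [(sub_pos.2 hlt).ne']
    ring
  have h := norm_le_interp_of_mem_verticalClosedStrip' hlt hmid hd hB
    (hline θ₀ B₀ hB₀) (hline θ₁ B₁ hB₁)
  rwa [hexp, ← eq_sub_of_add_eq hab] at h

theorem log_convexity_of_sup_norm_general
    (N : ℕ) (α : ℝ) (hα₁ : α ≤ π)
    (S : Set ℂ) (hS : S = {z : ℂ | z ≠ 0 ∧ 0 ≤ 2 * z.arg ∧ 2 * z.arg ≤ α})
    (u : ℂ → EuclideanSpace ℝ (Fin N) → ℂ)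
    (hu_bdd : ∃ M : ℝ, ∀ z ∈ S, ∀ x, ‖u z x‖ ≤ M)
    (hu_cont : ∀ x, ContinuousOn (fun z => u z x) S)
    (hu_an : ∀ x, DifferentiableOn ℂ (fun z => u z x) (interior S))
    (hu_scale : ∀ r : ℝ, 0 < r → ∀ z ∈ S, ∀ x : EuclideanSpace ℝ (Fin N),
      u ((r : ℂ) * z) x = u z (r • x))
    (c : ℝ → ℝ) (hc : ∀ θ, c θ = ⨆ x : EuclideanSpace ℝ (Fin N),
      ‖u (Complex.exp (Complex.I * θ / 2)) x‖)
    (hcpos : ∀ θ ∈ Icc (0 : ℝ) α, 0 < c θ) :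
    ConvexOn ℝ (Icc (0 : ℝ) α) (fun θ => Real.log (c θ)) := by
  change S = sector α at hS
  subst hS
  obtain ⟨M, hM⟩ := hu_bdd
  have hα : α ≤ 2 * π := by linarith [pi_pos]
  have hray : ∀ θ ∈ Icc 0 α, ∀ x, ∀ r : ℝ, 0 < r → ‖u (r * exp (I * θ / 2)) x‖ ≤ c θ := by
    intro θ hθ x r hr
    have hz : exp (I * θ / 2) ∈ sector α := exp_I_mul_div_two_mem_sector hα (by simpa using hθ)
    rw [hu_scale r hr _ hz, hc]
    exact le_ciSup ⟨M, forall_mem_range.2 (hM _ hz)⟩ (r • x)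
  refine convexOn_log_of_le_rpow_mul_rpow (convex_Icc 0 α) hcpos
    fun θ₀ hθ₀ θ₁ hθ₁ hlt a b ha hb hab => ?_
  rw [hc]
  exact ciSup_le fun x => norm_le_rpow_mul_rpow_of_sector hα (hu_cont x) (hu_an x)
    (fun z hz => hM z hz x) hθ₀.1 hlt hθ₁.2 (hray θ₀ hθ₀ x) (hray θ₁ hθ₁ x) ha.le hb.le hab

theorem log_convexity_of_sup_norm
    (N : ℕ) (hN : 1 ≤ N) (α : ℝ) (hα₀ : 0 < α) (hα₁ : α ≤ π)
    (S : Set ℂ) (hS : S = {z : ℂ | z ≠ 0 ∧ 0 ≤ 2 * z.arg ∧ 2 * z.arg ≤ α})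
    (u : ℂ → EuclideanSpace ℝ (Fin N) → ℂ)
    (hu_bdd : ∃ M : ℝ, ∀ z ∈ S, ∀ x, ‖u z x‖ ≤ M)
    (hu_cont : ∀ x, ContinuousOn (fun z => u z x) S)
    (hu_an : ∀ x, DifferentiableOn ℂ (fun z => u z x) (interior S))
    (hu_scale : ∀ r : ℝ, 0 < r → ∀ z ∈ S, ∀ x : EuclideanSpace ℝ (Fin N),
      u ((r : ℂ) * z) x = u z (r • x))
    (c : ℝ → ℝ) (hc : ∀ θ, c θ = ⨆ x : EuclideanSpace ℝ (Fin N),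
      ‖u (Complex.exp (Complex.I * θ / 2)) x‖)
    (hcpos : ∀ θ ∈ Icc (0 : ℝ) α, 0 < c θ) :
    ConvexOn ℝ (Icc (0 : ℝ) α) (fun θ => Real.log (c θ)) :=
  log_convexity_of_sup_norm_general N α hα₁ S hS u hu_bdd hu_cont hu_an hu_scale c hc hcpos
end
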